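/- Fix d ≥ 1 and N ≥ 2, and let Ω_i = { x ∈ [0,1]^d : (i−1)/N ≤ x_1 ≤ i/N } for i = 1,...,N be the vertical strip partition. If P_vert denotes the stratified sample consisting of one independent uniform point in each Ω_i, then E L2(P_vert)^2 = (1/2^d − ((3N−1)/(2N))·(1/3^d)) / N, and this is strictly smaller than the expected squared L2-discrepancy (1/2^d − 1/3^d)/N of N i.i.d. uniform points. -/

import Mathlib

open MeasureTheory Set
open scoped ENNReal

/-- The half-open box `[0,x) = ∏_j [0, x_j)`. -/
def box (d : ℕ) (x : Fin d → ℝ) : Set (Fin d → ℝ) :=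
  Set.univ.pi fun j => Set.Ico 0 (x j)

/-- The squared `L2`-discrepancy of the point set `P` in `[0,1]^d`. -/
noncomputable def disc2 (d N : ℕ) (P : Fin N → Fin d → ℝ) : ℝ :=
  ∫ x in Set.Icc (0 : Fin d → ℝ) 1,
    ((Set.ncard {i | P i ∈ box d x} : ℝ) / N - (volume (box d x)).toReal) ^ 2

/-- The uniform probability measure on a set `Ω` (normalized Lebesgue measure). -/
noncomputable def unif {d : ℕ} (Ω : Set (Fin d → ℝ)) : Measure (Fin d → ℝ) :=
  (volume Ω)⁻¹ • volume.restrict Ω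

/-- The vertical strip `Ω_i = {x ∈ [0,1]^d : i/N ≤ x_1 ≤ (i+1)/N}` (with `i = 0,…,N−1`). -/
def vertStrip (d N : ℕ) (hd : 0 < d) (i : Fin N) : Set (Fin d → ℝ) :=
  {x ∈ Set.Icc (0 : Fin d → ℝ) 1 |
    (i : ℝ) / N ≤ x ⟨0, hd⟩ ∧ x ⟨0, hd⟩ ≤ ((i : ℝ) + 1) / N}

noncomputable def gfun (N : ℕ) (i : Fin N) (t : ℝ) : ℝ :=
  max (min t (((i:ℝ)+1)/N) - (i:ℝ)/N) 0

noncomputable def phi (d N : ℕ) (hd : 0 < d) (i : Fin N) (j : Fin d) : ℝ → ℝ :=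
  if j = (⟨0, hd⟩ : Fin d) then fun t => N * gfun N i t else id

noncomputable def pprod (d N : ℕ) (hd : 0 < d) (i : Fin N) (x : Fin d → ℝ) : ℝ :=
  ∏ j, phi d N hd i j (x j)

lemma vertStrip_eq (d N : ℕ) (hd : 0 < d) (i : Fin N) :
    vertStrip d N hd i = Set.univ.pi (fun j : Fin d =>
      if j = (⟨0, hd⟩ : Fin d) then Set.Icc ((i:ℝ)/N) (((i:ℝ)+1)/N) else Set.Icc 0 1) := by
  have hN : (0:ℝ) < N := by exact_mod_cast i.pos
  have h1 : (0:ℝ) ≤ (i:ℝ)/N := by positivity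
  have h2 : ((i:ℝ)+1)/N ≤ 1 := by
    rw [div_le_one hN]
    have : (i:ℝ) + 1 ≤ N := by exact_mod_cast i.isLt
    linarith
  ext x
  simp only [vertStrip, Set.mem_setOf_eq, Set.mem_Icc, Set.mem_pi, Set.mem_univ, true_implies,
    Pi.le_def]
  constructor
  · rintro ⟨⟨hx0, hx1⟩, ha, hb⟩ j
    by_cases hj : j = (⟨0, hd⟩ : Fin d)
    · simp [hj, ha, hb]
    · simp [hj, Set.mem_Icc]
      exact ⟨hx0 j, hx1 j⟩
  · intro h
    have h0 := h ⟨0, hd⟩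
    simp only [if_pos rfl, Set.mem_Icc] at h0
    refine ⟨⟨fun j => ?_, fun j => ?_⟩, h0.1, h0.2⟩
    · by_cases hj : j = (⟨0, hd⟩ : Fin d)
      · subst hj; simp only [Pi.zero_apply]; linarith [h0.1]
      · have := h j; simp [hj, Set.mem_Icc] at this; simpa using this.1
    · by_cases hj : j = (⟨0, hd⟩ : Fin d)
      · subst hj; simp only [Pi.one_apply]; linarith [h0.2]
      · have := h j; simp [hj, Set.mem_Icc] at this; simpa using this.2

lemma measurableSet_vertStrip (d N : ℕ) (hd : 0 < d) (i : Fin N) :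
    MeasurableSet (vertStrip d N hd i) := by
  rw [vertStrip_eq]
  exact MeasurableSet.univ_pi fun j => by split <;> exact measurableSet_Icc

lemma volume_vertStrip (d N : ℕ) (hd : 0 < d) (i : Fin N) :
    volume (vertStrip d N hd i) = ENNReal.ofReal (1 / N) := by
  have hN : (0:ℝ) < N := by exact_mod_cast i.pos
  rw [vertStrip_eq, volume_pi_pi]
  have : ∀ j : Fin d, volume (if j = (⟨0, hd⟩ : Fin d) then
      Set.Icc ((i:ℝ)/N) (((i:ℝ)+1)/N) else Set.Icc (0:ℝ) 1)
      = if j = (⟨0, hd⟩ : Fin d) then ENNReal.ofReal (1/N) else 1 := by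
    intro j
    split
    · rw [Real.volume_Icc]; congr 1; field_simp; ring
    · simp [Real.volume_Icc]
  simp only [this]
  rw [Finset.prod_ite_eq' Finset.univ (⟨0, hd⟩ : Fin d) fun _ => ENNReal.ofReal (1/N)]
  simp

lemma volume_box (d : ℕ) (x : Fin d → ℝ) :
    volume (box d x) = ∏ j, ENNReal.ofReal (x j) := by
  rw [box, volume_pi_pi]
  simp [Real.volume_Ico]

lemma measurableSet_box (d : ℕ) (x : Fin d → ℝ) : MeasurableSet (box d x) :=
  MeasurableSet.univ_pi fun _ => measurableSet_Ico

lemma ofReal_max_zero (r : ℝ) : ENNReal.ofReal (max r 0) = ENNReal.ofReal r := by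
  rcases le_total r 0 with h | h
  · rw [max_eq_right h, ENNReal.ofReal_zero, ENNReal.ofReal_of_nonpos h]
  · rw [max_eq_left h]

lemma vol_Ico_inter_Icc (t a b : ℝ) (ha : 0 ≤ a) :
    volume (Set.Ico 0 t ∩ Set.Icc a b) = ENNReal.ofReal (max (min t b - a) 0) := by
  rw [ofReal_max_zero]
  rcases le_or_gt t b with h | h
  · have : Set.Ico 0 t ∩ Set.Icc a b = Set.Ico a t := by
      ext y
      simp only [Set.mem_inter_iff, Set.mem_Ico, Set.mem_Icc]
      constructor
      · rintro ⟨⟨_, h1⟩, h2, _⟩; exact ⟨h2, h1⟩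
      · rintro ⟨h1, h2⟩; exact ⟨⟨le_trans ha h1, h2⟩, h1, by linarith⟩
    rw [this, Real.volume_Ico, min_eq_left h]
  · have : Set.Ico 0 t ∩ Set.Icc a b = Set.Icc a b := by
      ext y
      simp only [Set.mem_inter_iff, Set.mem_Ico, Set.mem_Icc]
      constructor
      · rintro ⟨_, h2⟩; exact h2
      · rintro ⟨h1, h2⟩
        refine ⟨⟨le_trans ha h1, ?_⟩, h1, h2⟩
        linarith
    rw [this, Real.volume_Icc, min_eq_right (le_of_lt h)]

lemma gfun_nonneg (N : ℕ) (i : Fin N) (t : ℝ) : 0 ≤ gfun N i t := le_max_right _ _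

lemma unif_box (d N : ℕ) (hd : 0 < d) (i : Fin N) (x : Fin d → ℝ)
    (hx : x ∈ Set.Icc (0 : Fin d → ℝ) 1) :
    (unif (vertStrip d N hd i) (box d x)).toReal = pprod d N hd i x := by
  set i0 : Fin d := ⟨0, hd⟩ with hi0
  have hN : (0:ℝ) < N := by exact_mod_cast i.pos
  have hxm : ∀ j, 0 ≤ x j ∧ x j ≤ 1 := fun j => ⟨hx.1 j, hx.2 j⟩
  have hsets : box d x ∩ vertStrip d N hd i = Set.univ.pi (fun j => Set.Ico 0 (x j) ∩
      (if j = i0 then Set.Icc ((i:ℝ)/N) (((i:ℝ)+1)/N) else Set.Icc 0 1)) := by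
    rw [vertStrip_eq, box, ← Set.pi_inter_distrib]
  have hvol : ∀ j : Fin d, volume (Set.Ico 0 (x j) ∩
      (if j = i0 then Set.Icc ((i:ℝ)/N) (((i:ℝ)+1)/N) else Set.Icc 0 1))
      = ENNReal.ofReal (if j = i0 then gfun N i (x j) else x j) := by
    intro j
    split
    · rw [vol_Ico_inter_Icc _ _ _ (by positivity)]; rfl
    · have : Set.Ico 0 (x j) ∩ Set.Icc (0:ℝ) 1 = Set.Ico 0 (x j) := by
        apply Set.inter_eq_left.2
        intro y hy
        exact ⟨hy.1, le_trans (le_of_lt hy.2) (hxm j).2⟩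
      rw [this, Real.volume_Ico, sub_zero]
  rw [unif, Measure.smul_apply, Measure.restrict_apply (measurableSet_box d x),
    volume_vertStrip, hsets, volume_pi_pi]
  simp only [hvol, smul_eq_mul]
  rw [ENNReal.toReal_mul, ENNReal.toReal_inv, ENNReal.toReal_ofReal (by positivity),
    ENNReal.toReal_prod]
  have hfac : ∀ j : Fin d, (ENNReal.ofReal (if j = i0 then gfun N i (x j) else x j)).toReal
      = if j = i0 then gfun N i (x j) else x j := by
    intro j
    rw [ENNReal.toReal_ofReal]
    split
    · exact gfun_nonneg N i _
    · exact (hxm j).1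
  simp only [hfac]
  rw [pprod]
  rw [← Finset.mul_prod_erase Finset.univ _ (Finset.mem_univ i0),
    ← Finset.mul_prod_erase Finset.univ (fun j => phi d N hd i j (x j)) (Finset.mem_univ i0)]
  have h1 : ∀ j ∈ Finset.univ.erase i0,
      (if j = i0 then gfun N i (x j) else x j) = phi d N hd i j (x j) := by
    intro j hj
    have : j ≠ i0 := Finset.ne_of_mem_erase hj
    rw [if_neg this, phi, if_neg this]; rfl
  rw [Finset.prod_congr rfl h1, if_pos rfl, phi, if_pos rfl]
  have : (1/(N:ℝ))⁻¹ = N := by field_simp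
  rw [this]; ring

lemma unif_prob (d N : ℕ) (hd : 0 < d) (i : Fin N) :
    IsProbabilityMeasure (unif (vertStrip d N hd i)) := by
  have hN : (0:ℝ) < N := by exact_mod_cast i.pos
  constructor
  rw [unif, Measure.smul_apply, Measure.restrict_apply MeasurableSet.univ, Set.univ_inter,
    volume_vertStrip, smul_eq_mul, ENNReal.inv_mul_cancel]
  · exact ne_of_gt (ENNReal.ofReal_pos.2 (by positivity))
  · exact ENNReal.ofReal_ne_top

lemma sum_clip (M : ℕ) (s : ℝ) (hs : 0 ≤ s) :
    ∑ k ∈ Finset.range M, max (min s ((k:ℝ)+1) - k) 0 = min s M := by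
  induction M with
  | zero => simp [min_eq_right hs]
  | succ M ih =>
    rw [Finset.sum_range_succ, ih]
    push_cast
    rcases le_total s (M:ℝ) with h | h
    · rw [min_eq_left h, min_eq_left (by linarith : s ≤ (M:ℝ)+1),
        max_eq_right (by linarith : s - (M:ℝ) ≤ 0), add_zero]
    · rcases le_total s ((M:ℝ)+1) with h2 | h2
      · rw [min_eq_right h, min_eq_left h2, max_eq_left (by linarith : (0:ℝ) ≤ s - M)]; ring
      · rw [min_eq_right h, min_eq_right h2, max_eq_left (by linarith : (0:ℝ) ≤ (M:ℝ)+1-M)]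
        ring

lemma sum_gfun (N : ℕ) (hN : 0 < N) (t : ℝ) (ht : t ∈ Set.Icc (0:ℝ) 1) :
    ∑ i : Fin N, gfun N i t = t := by
  have hN' : (0:ℝ) < N := by exact_mod_cast hN
  have key : ∀ i : Fin N, gfun N i t = (1/N) * max (min (N*t) ((i:ℝ)+1) - i) 0 := by
    intro i
    rw [gfun]
    rw [show min t (((i:ℝ)+1)/N) - (i:ℝ)/N = (1/N) * (min (N*t) ((i:ℝ)+1) - i) by
      rw [show min t (((i:ℝ)+1)/N) = (1/N) * min (N*t) ((i:ℝ)+1) by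
        rcases le_total t (((i:ℝ)+1)/N) with h | h
        · rw [min_eq_left h, min_eq_left (by nlinarith [(le_div_iff₀ hN').1 h])]
          field_simp
        · rw [min_eq_right h, min_eq_right (by nlinarith [(div_le_iff₀ hN').1 h])]
          field_simp]
      ring]
    rw [mul_max_of_nonneg _ _ (by positivity : (0:ℝ) ≤ 1/N), mul_zero]
  simp only [key]
  rw [← Finset.mul_sum, Fin.sum_univ_eq_sum_range (fun k => max (min (N*t) ((k:ℝ)+1) - k) 0),
    sum_clip N (N*t) (mul_nonneg hN'.le ht.1)]
  rw [min_eq_left (by nlinarith [ht.2])]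
  field_simp

lemma vol_box_toReal (d : ℕ) (x : Fin d → ℝ) (hx : x ∈ Set.Icc (0 : Fin d → ℝ) 1) :
    (volume (box d x)).toReal = ∏ j, x j := by
  rw [volume_box, ENNReal.toReal_prod]
  exact Finset.prod_congr rfl fun j _ => ENNReal.toReal_ofReal (hx.1 j)

lemma sum_pprod (d N : ℕ) (hd : 0 < d) (hN : 0 < N) (x : Fin d → ℝ)
    (hx : x ∈ Set.Icc (0 : Fin d → ℝ) 1) :
    ∑ i : Fin N, pprod d N hd i x = N * (volume (box d x)).toReal := by
  have key : ∀ i : Fin N, pprod d N hd i x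
      = (N * gfun N i (x ⟨0, hd⟩)) * ∏ j ∈ Finset.univ.erase (⟨0, hd⟩ : Fin d), x j := by
    intro i
    rw [pprod, ← Finset.mul_prod_erase Finset.univ _ (Finset.mem_univ (⟨0, hd⟩ : Fin d))]
    have e0 : phi d N hd i ⟨0, hd⟩ = fun t => (N:ℝ) * gfun N i t := by simp [phi]
    have ep : ∏ j ∈ Finset.univ.erase (⟨0, hd⟩ : Fin d), phi d N hd i j (x j)
        = ∏ j ∈ Finset.univ.erase (⟨0, hd⟩ : Fin d), x j :=
      Finset.prod_congr rfl fun j hj => by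
        have : phi d N hd i j = id := by simp [phi, Finset.ne_of_mem_erase hj]
        rw [this]; rfl
    rw [e0, ep]
  simp only [key]
  rw [← Finset.sum_mul, ← Finset.mul_sum,
    sum_gfun N hN (x ⟨0, hd⟩) ⟨hx.1 ⟨0, hd⟩, hx.2 ⟨0, hd⟩⟩, vol_box_toReal d x hx,
    ← Finset.mul_prod_erase Finset.univ _ (Finset.mem_univ (⟨0, hd⟩ : Fin d))]
  ring

lemma restrict_pi_Icc (d : ℕ) :
    (volume : Measure (Fin d → ℝ)).restrict (Set.Icc 0 1)
      = Measure.pi (fun _ : Fin d => (volume : Measure ℝ).restrict (Set.Icc 0 1)) := by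
  have hIcc : (Set.Icc (0 : Fin d → ℝ) 1) = Set.univ.pi (fun _ : Fin d => Set.Icc (0:ℝ) 1) := by
    rw [Set.pi_univ_Icc]; rfl
  refine (Measure.pi_eq fun s hs => ?_).symm
  rw [Measure.restrict_apply (MeasurableSet.univ_pi hs), hIcc, ← Set.pi_inter_distrib,
    volume_pi_pi]
  exact Finset.prod_congr rfl fun j _ => (Measure.restrict_apply (hs j)).symm

lemma continuous_gfun (N : ℕ) (i : Fin N) : Continuous (gfun N i) :=
  (((continuous_id.min continuous_const).sub continuous_const).max continuous_const)

lemma integral_gfun_pow (N : ℕ) (i : Fin N) (n : ℕ) :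
    ∫ t in (0:ℝ)..1, (gfun N i t)^(n+1)
      = (1/N)^(n+2)/(n+2) + (1/N)^(n+1)*(1 - ((i:ℝ)+1)/N) := by
  have hN : (0:ℝ) < N := by exact_mod_cast i.pos
  set a : ℝ := (i:ℝ)/N with ha
  set b : ℝ := ((i:ℝ)+1)/N with hb
  have h0a : (0:ℝ) ≤ a := by positivity
  have hab : a ≤ b := by
    rw [ha, hb, div_le_div_iff_of_pos_right hN]; linarith
  have hb1 : b ≤ 1 := by
    rw [hb, div_le_one hN]
    have : (i:ℝ) + 1 ≤ N := by exact_mod_cast i.isLt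
    linarith
  have hba : b - a = 1/N := by rw [ha, hb]; field_simp; ring
  have hcont : Continuous (fun t => (gfun N i t)^(n+1)) := (continuous_gfun N i).pow _
  have hint : ∀ u v : ℝ, IntervalIntegrable (fun t => (gfun N i t)^(n+1)) volume u v :=
    fun u v => hcont.intervalIntegrable u v
  have split : ∫ t in (0:ℝ)..1, (gfun N i t)^(n+1)
      = (∫ t in (0:ℝ)..a, (gfun N i t)^(n+1)) + ((∫ t in a..b, (gfun N i t)^(n+1))
        + ∫ t in b..(1:ℝ), (gfun N i t)^(n+1)) := by
    rw [intervalIntegral.integral_add_adjacent_intervals (hint a b) (hint b 1),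
      intervalIntegral.integral_add_adjacent_intervals (hint 0 a) (hint a 1)]
  rw [split]
  have e1 : ∫ t in (0:ℝ)..a, (gfun N i t)^(n+1) = 0 := by
    rw [intervalIntegral.integral_congr (g := fun _ => (0:ℝ)) ?_, intervalIntegral.integral_const,
      smul_zero]
    intro t ht
    rw [Set.uIcc_of_le h0a] at ht
    have hg : gfun N i t = 0 := by
      rw [gfun, ← ha, ← hb, min_eq_left (le_trans ht.2 hab),
        max_eq_right (by linarith [ht.2])]
    show gfun N i t ^ (n+1) = (0:ℝ)
    rw [hg, zero_pow (Nat.succ_ne_zero n)]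
  have e2 : ∫ t in a..b, (gfun N i t)^(n+1) = (1/N)^(n+2)/(n+2) := by
    have : EqOn (fun t => (gfun N i t)^(n+1)) (fun t => (t - a)^(n+1)) (Set.uIcc a b) := by
      intro t ht
      rw [Set.uIcc_of_le hab] at ht
      simp only
      rw [gfun, ← ha, ← hb, min_eq_left ht.2, max_eq_left (by linarith [ht.1])]
    rw [intervalIntegral.integral_congr this,
      intervalIntegral.integral_comp_sub_right (fun u => u^(n+1)) a,
      integral_pow, sub_self, zero_pow (Nat.succ_ne_zero (n+1)), hba]
    push_cast
    ring_nf
  have e3 : ∫ t in b..(1:ℝ), (gfun N i t)^(n+1) = (1/N)^(n+1)*(1-b) := by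
    have : EqOn (fun t => (gfun N i t)^(n+1)) (fun _ => ((1:ℝ)/N)^(n+1)) (Set.uIcc b 1) := by
      intro t ht
      rw [Set.uIcc_of_le hb1] at ht
      simp only
      rw [gfun, ← ha, ← hb, min_eq_right ht.1, hba, max_eq_left (by positivity)]
    rw [intervalIntegral.integral_congr this, intervalIntegral.integral_const, smul_eq_mul]
    ring
  rw [e1, e2, e3, hb]
  ring

lemma setIntegral_Icc_eq_interval (f : ℝ → ℝ) :
    ∫ t in Set.Icc (0:ℝ) 1, f t = ∫ t in (0:ℝ)..1, f t := by
  rw [MeasureTheory.integral_Icc_eq_integral_Ioc, intervalIntegral.integral_of_le zero_le_one]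

lemma intId : ∫ t in Set.Icc (0:ℝ) 1, t = 1/2 := by
  rw [setIntegral_Icc_eq_interval]
  simp

lemma intSq : ∫ t in Set.Icc (0:ℝ) 1, t^2 = 1/3 := by
  rw [setIntegral_Icc_eq_interval (fun t => t^2), integral_pow]
  norm_num

lemma intA (N : ℕ) (i : Fin N) :
    ∫ t in Set.Icc (0:ℝ) 1, (N:ℝ) * gfun N i t = 1/(2*N) + ((N:ℝ)-1-(i:ℝ))/N := by
  have hN : (0:ℝ) < N := by exact_mod_cast i.pos
  rw [setIntegral_Icc_eq_interval (fun t => (N:ℝ) * gfun N i t),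
    intervalIntegral.integral_const_mul]
  have := integral_gfun_pow N i 0
  simp only [pow_one, zero_add, pow_succ, pow_zero, one_mul] at this ⊢
  rw [show ∫ t in (0:ℝ)..1, gfun N i t = ∫ t in (0:ℝ)..1, (gfun N i t)^(0+1) by norm_num,
    integral_gfun_pow N i 0]
  have hi : (i:ℝ) + 1 ≤ N := by exact_mod_cast i.isLt
  push_cast
  field_simp
  ring

lemma intB (N : ℕ) (i : Fin N) :
    ∫ t in Set.Icc (0:ℝ) 1, ((N:ℝ) * gfun N i t)^2 = 1/(3*N) + ((N:ℝ)-1-(i:ℝ))/N := by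
  have hN : (0:ℝ) < N := by exact_mod_cast i.pos
  rw [setIntegral_Icc_eq_interval (fun t => ((N:ℝ) * gfun N i t)^2)]
  simp only [mul_pow]
  rw [intervalIntegral.integral_const_mul,
    show ∫ t in (0:ℝ)..1, (gfun N i t)^2 = ∫ t in (0:ℝ)..1, (gfun N i t)^(1+1) by norm_num,
    integral_gfun_pow N i 1]
  push_cast
  field_simp
  ring

lemma integral_pi_map {n : ℕ} {α : Type*} [MeasurableSpace α] (μ : Fin n → Measure α)
    [∀ i, SigmaFinite (μ i)] (f : Fin n → α → ℝ) :
    ∫ P, ∏ i, f i (P i) ∂(Measure.pi μ) = ∏ i, ∫ y, f i y ∂(μ i) :=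
  MeasureTheory.integral_fintype_prod_eq_prod (E := fun _ => α) f
    (μ := μ)

lemma integral_eval {n : ℕ} {α : Type*} [MeasurableSpace α] (μ : Fin n → Measure α)
    [∀ i, IsProbabilityMeasure (μ i)] (i : Fin n) (f : α → ℝ) :
    ∫ P, f (P i) ∂(Measure.pi μ) = ∫ y, f y ∂(μ i) := by
  classical
  have h := integral_pi_map μ (fun k => if k = i then f else fun _ => (1:ℝ))
  have e1 : ∀ P : Fin n → α, (∏ k, (if k = i then f else fun _ => (1:ℝ)) (P k)) = f (P i) := by
    intro P
    rw [← Finset.mul_prod_erase Finset.univ _ (Finset.mem_univ i), if_pos rfl,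
      Finset.prod_eq_one (fun k hk => by rw [if_neg (Finset.ne_of_mem_erase hk)]), mul_one]
  have e2 : (∏ k, ∫ y, (if k = i then f else fun _ => (1:ℝ)) y ∂(μ k)) = ∫ y, f y ∂(μ i) := by
    rw [← Finset.mul_prod_erase Finset.univ _ (Finset.mem_univ i), if_pos rfl,
      Finset.prod_eq_one (fun k hk => by rw [if_neg (Finset.ne_of_mem_erase hk)]; simp), mul_one]
  simp only [e1] at h
  rw [e2] at h
  exact h

lemma integral_eval_two {n : ℕ} {α : Type*} [MeasurableSpace α] (μ : Fin n → Measure α)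
    [∀ i, IsProbabilityMeasure (μ i)] {i j : Fin n} (hij : i ≠ j) (f g : α → ℝ) :
    ∫ P, f (P i) * g (P j) ∂(Measure.pi μ) = (∫ y, f y ∂(μ i)) * (∫ y, g y ∂(μ j)) := by
  classical
  have h := integral_pi_map μ (fun k => if k = i then f else if k = j then g else fun _ => (1:ℝ))
  have hj : j ∈ Finset.univ.erase i := Finset.mem_erase.2 ⟨hij.symm, Finset.mem_univ j⟩
  have e1 : ∀ P : Fin n → α,
      (∏ k, (if k = i then f else if k = j then g else fun _ => (1:ℝ)) (P k))
        = f (P i) * g (P j) := by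
    intro P
    rw [← Finset.mul_prod_erase Finset.univ _ (Finset.mem_univ i), if_pos rfl,
      ← Finset.mul_prod_erase _ _ hj, if_neg hij.symm, if_pos rfl,
      Finset.prod_eq_one (fun k hk => by
        rw [if_neg (Finset.ne_of_mem_erase (Finset.mem_of_mem_erase hk)),
          if_neg (Finset.ne_of_mem_erase hk)]), mul_one]
  have e2 : (∏ k, ∫ y, (if k = i then f else if k = j then g else fun _ => (1:ℝ)) y ∂(μ k))
      = (∫ y, f y ∂(μ i)) * (∫ y, g y ∂(μ j)) := by
    rw [← Finset.mul_prod_erase Finset.univ _ (Finset.mem_univ i), if_pos rfl,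
      ← Finset.mul_prod_erase _ _ hj, if_neg hij.symm, if_pos rfl,
      Finset.prod_eq_one (fun k hk => by
        rw [if_neg (Finset.ne_of_mem_erase (Finset.mem_of_mem_erase hk)),
          if_neg (Finset.ne_of_mem_erase hk)]; simp), mul_one]
  simp only [e1] at h
  rw [e2] at h
  exact h

lemma measurable_chi (d : ℕ) (x : Fin d → ℝ) [DecidablePred (· ∈ box d x)] :
    Measurable (fun y : Fin d → ℝ => if y ∈ box d x then (1:ℝ) else 0) :=
  Measurable.ite (measurableSet_box d x) measurable_const measurable_const

lemma chi_integral {d : ℕ} (μ : Measure (Fin d → ℝ)) (x : Fin d → ℝ)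
    [DecidablePred (· ∈ box d x)] :
    ∫ y, (if y ∈ box d x then (1:ℝ) else 0) ∂μ = (μ (box d x)).toReal := by
  have : (fun y => if y ∈ box d x then (1:ℝ) else 0)
      = (box d x).indicator (fun _ => (1:ℝ)) := by
    funext y; by_cases h : y ∈ box d x <;> simp [h]
  rw [this, MeasureTheory.integral_indicator_const (1:ℝ) (measurableSet_box d x), smul_eq_mul,
    mul_one]
  rfl

lemma integrable_of_bounded {α : Type*} [MeasurableSpace α] {μ : Measure α} [IsFiniteMeasure μ]
    {f : α → ℝ} (hm : Measurable f) (C : ℝ) (hC : ∀ y, ‖f y‖ ≤ C) : Integrable f μ :=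
  Integrable.mono' (integrable_const C) hm.aestronglyMeasurable (Filter.Eventually.of_forall hC)

lemma inner_integral (d N : ℕ) (hd : 0 < d) (hN : 0 < N) (x : Fin d → ℝ)
    (hx : x ∈ Set.Icc (0 : Fin d → ℝ) 1) :
    ∫ P : Fin N → Fin d → ℝ,
        ((Set.ncard {i | P i ∈ box d x} : ℝ) / N - (volume (box d x)).toReal) ^ 2
        ∂(Measure.pi fun i : Fin N => unif (vertStrip d N hd i))
      = (1/(N:ℝ)^2) * ∑ i : Fin N, (pprod d N hd i x - (pprod d N hd i x)^2) := by
  classical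
  have hNR : (0:ℝ) < N := by exact_mod_cast hN
  have hN0 : (N:ℝ) ≠ 0 := hNR.ne'
  set μi : Fin N → Measure (Fin d → ℝ) := fun i => unif (vertStrip d N hd i) with hμi
  haveI : ∀ i, IsProbabilityMeasure (μi i) := fun i => unif_prob d N hd i
  set p : Fin N → ℝ := fun i => pprod d N hd i x with hp
  set c : Fin N → (Fin d → ℝ) → ℝ := fun i y => (if y ∈ box d x then 1 else 0) - p i with hc
  have hcm : ∀ i, Measurable (c i) := fun i => (measurable_chi d x).sub measurable_const
  have hcb : ∀ i y, ‖c i y‖ ≤ 1 + |p i| := by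
    intro i y
    rw [Real.norm_eq_abs]
    have h1 : |(if y ∈ box d x then (1:ℝ) else 0)| ≤ 1 := by split <;> simp
    calc |(if y ∈ box d x then (1:ℝ) else 0) - p i|
        ≤ |(if y ∈ box d x then (1:ℝ) else 0)| + |p i| := abs_sub _ _
      _ ≤ 1 + |p i| := by linarith
  have hpval : ∀ i, (μi i (box d x)).toReal = p i := fun i => unif_box d N hd i x hx
  have hχint : ∀ i, Integrable (fun y => if y ∈ box d x then (1:ℝ) else 0) (μi i) :=
    fun i => integrable_of_bounded (measurable_chi d x) 1
      (fun y => by rw [Real.norm_eq_abs]; split <;> simp)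
  have hcint0 : ∀ i, ∫ y, c i y ∂(μi i) = 0 := by
    intro i
    simp only [hc]
    rw [integral_sub (hχint i) (integrable_const _), chi_integral, integral_const]
    simp [hpval i]
  have hcint2 : ∀ i, ∫ y, c i y * c i y ∂(μi i) = p i - (p i)^2 := by
    intro i
    have hpt : ∀ y, c i y * c i y
        = (if y ∈ box d x then (1:ℝ) else 0) * (1 - 2 * p i) + (p i)^2 := by
      intro y
      simp only [hc]
      split <;> ring
    simp only [hpt]
    rw [integral_add ((hχint i).mul_const _) (integrable_const _), integral_mul_const,
      chi_integral, integral_const, hpval i]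
    simp
    ring
  have hkey : ∀ P : Fin N → Fin d → ℝ,
      ((Set.ncard {i | P i ∈ box d x} : ℝ) / N - (volume (box d x)).toReal) ^ 2
        = (1/(N:ℝ)^2) * ∑ i, ∑ j, c i (P i) * c j (P j) := by
    intro P
    have hcard : (Set.ncard {i | P i ∈ box d x} : ℝ)
        = ∑ i, (if P i ∈ box d x then (1:ℝ) else 0) := by
      rw [Set.ncard_eq_toFinset_card', Set.toFinset_setOf, Finset.card_filter, Nat.cast_sum]
      exact Finset.sum_congr rfl fun i _ => by split <;> simp
    have hpsum : ∑ i, p i = N * (volume (box d x)).toReal := by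
      simp only [hp]
      exact sum_pprod d N hd hN x hx
    have hsum : ∑ i, c i (P i)
        = (Set.ncard {i | P i ∈ box d x} : ℝ) - N * (volume (box d x)).toReal := by
      simp only [hc]
      rw [Finset.sum_sub_distrib, ← hcard, hpsum]
    have h2 : ∑ i, ∑ j, c i (P i) * c j (P j) = (∑ i, c i (P i))^2 := by
      rw [sq, Finset.sum_mul_sum]
    rw [h2, hsum]
    field_simp
  simp only [hkey]
  rw [integral_const_mul]
  congr 1
  have hint : ∀ i j, Integrable (fun P : Fin N → Fin d → ℝ => c i (P i) * c j (P j))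
      (Measure.pi μi) := by
    intro i j
    refine integrable_of_bounded
      (((hcm i).comp (measurable_pi_apply i)).mul ((hcm j).comp (measurable_pi_apply j)))
      ((1+|p i|)*(1+|p j|)) ?_
    intro P
    rw [norm_mul]
    exact mul_le_mul (hcb i _) (hcb j _) (norm_nonneg _) (by positivity)
  rw [integral_finset_sum _ (fun i _ => integrable_finset_sum _ fun j _ => hint i j)]
  refine Finset.sum_congr rfl fun i _ => ?_
  rw [integral_finset_sum _ (fun j _ => hint i j)]
  have hterm : ∀ j, ∫ P, c i (P i) * c j (P j) ∂(Measure.pi μi)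
      = if i = j then p i - (p i)^2 else 0 := by
    intro j
    by_cases h : i = j
    · subst h
      rw [if_pos rfl]
      exact (integral_eval μi i fun y => c i y * c i y).trans (hcint2 i)
    · rw [if_neg h]
      exact (integral_eval_two μi h (c i) (c j)).trans (by rw [hcint0 i, zero_mul])
  simp only [hterm]
  simp
  rfl

lemma ncard_eq_sum {N : ℕ} (s : Fin N → Prop) [DecidablePred s] :
    (Set.ncard {i | s i} : ℝ) = ∑ i, (if s i then (1:ℝ) else 0) := by
  rw [Set.ncard_eq_toFinset_card', Set.toFinset_setOf, Finset.card_filter, Nat.cast_sum]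
  exact Finset.sum_congr rfl fun i _ => by split <;> simp

lemma measurable_F (d N : ℕ) :
    Measurable (fun q : (Fin N → Fin d → ℝ) × (Fin d → ℝ) =>
      ((Set.ncard {i | q.1 i ∈ box d q.2} : ℝ) / N - (volume (box d q.2)).toReal) ^ 2) := by
  classical
  have hbi : ∀ i : Fin N,
      MeasurableSet {q : (Fin N → Fin d → ℝ) × (Fin d → ℝ) | q.1 i ∈ box d q.2} := by
    intro i
    have : {q : (Fin N → Fin d → ℝ) × (Fin d → ℝ) | q.1 i ∈ box d q.2}
        = ⋂ j, ({q : (Fin N → Fin d → ℝ) × (Fin d → ℝ) | 0 ≤ q.1 i j}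
            ∩ {q : (Fin N → Fin d → ℝ) × (Fin d → ℝ) | q.1 i j < q.2 j}) := by
      ext q
      simp only [Set.mem_setOf_eq, box, Set.mem_pi, Set.mem_univ, true_implies, Set.mem_Ico,
        Set.mem_iInter, Set.mem_inter_iff]
    rw [this]
    refine MeasurableSet.iInter fun j => MeasurableSet.inter ?_ ?_
    · exact measurableSet_le measurable_const (measurable_fst.eval.eval)
    · exact measurableSet_lt (measurable_fst.eval.eval) (measurable_snd.eval)
  have heq : (fun q : (Fin N → Fin d → ℝ) × (Fin d → ℝ) =>
      ((Set.ncard {i | q.1 i ∈ box d q.2} : ℝ) / N - (volume (box d q.2)).toReal) ^ 2)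
      = fun q => ((∑ i : Fin N, (if q.1 i ∈ box d q.2 then (1:ℝ) else 0)) / N
          - (∏ j, ENNReal.ofReal (q.2 j)).toReal) ^ 2 := by
    funext q
    rw [ncard_eq_sum, volume_box]
  rw [heq]
  have hv : Measurable (fun q : (Fin N → Fin d → ℝ) × (Fin d → ℝ) =>
      (∏ j, ENNReal.ofReal (q.2 j)).toReal) :=
    ENNReal.measurable_toReal.comp (Finset.measurable_prod _ fun j _ =>
      ENNReal.measurable_ofReal.comp ((measurable_pi_apply j).comp measurable_snd))
  have hs : Measurable (fun q : (Fin N → Fin d → ℝ) × (Fin d → ℝ) =>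
      ∑ i : Fin N, (if q.1 i ∈ box d q.2 then (1:ℝ) else 0)) :=
    Finset.measurable_sum _ fun i _ => Measurable.ite (hbi i) measurable_const measurable_const
  exact ((hs.div_const _).sub hv).pow_const 2

lemma continuous_pprod (d N : ℕ) (hd : 0 < d) (i : Fin N) :
    Continuous (pprod d N hd i) := by
  unfold pprod
  refine continuous_finset_prod _ fun j _ => ?_
  have : Continuous (phi d N hd i j) := by
    unfold phi
    split
    · exact continuous_const.mul (continuous_gfun N i)
    · exact continuous_id
  exact this.comp (continuous_apply j)

lemma integral_pprod_pow (d N : ℕ) (hd : 0 < d) (i : Fin N) :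
    (∫ x in Set.Icc (0 : Fin d → ℝ) 1, pprod d N hd i x
        = (1/(2*(N:ℝ)) + ((N:ℝ)-1-(i:ℝ))/N) * (1/2)^(d-1))
    ∧ (∫ x in Set.Icc (0 : Fin d → ℝ) 1, (pprod d N hd i x)^2
        = (1/(3*(N:ℝ)) + ((N:ℝ)-1-(i:ℝ))/N) * (1/3)^(d-1)) := by
  have hphi0 : phi d N hd i ⟨0, hd⟩ = fun t => (N:ℝ) * gfun N i t := by simp [phi]
  have hphij : ∀ j : Fin d, j ≠ ⟨0, hd⟩ → phi d N hd i j = id := by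
    intro j hj; simp [phi, hj]
  constructor
  · rw [restrict_pi_Icc d]
    simp only [pprod]
    have h := integral_pi_map (fun _ : Fin d => volume.restrict (Set.Icc (0:ℝ) 1))
      (fun j => phi d N hd i j)
    rw [h, ← Finset.mul_prod_erase Finset.univ _ (Finset.mem_univ (⟨0, hd⟩ : Fin d))]
    have e1 : ∫ y, phi d N hd i ⟨0, hd⟩ y ∂(volume.restrict (Set.Icc (0:ℝ) 1))
        = 1/(2*(N:ℝ)) + ((N:ℝ)-1-(i:ℝ))/N := by
      simp only [hphi0]
      exact intA N i
    have e2 : ∀ j ∈ Finset.univ.erase (⟨0, hd⟩ : Fin d),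
        ∫ y, phi d N hd i j y ∂(volume.restrict (Set.Icc (0:ℝ) 1)) = 1/2 := by
      intro j hj
      simp only [hphij j (Finset.ne_of_mem_erase hj), id]
      exact intId
    rw [e1, Finset.prod_congr rfl e2, Finset.prod_const,
      Finset.card_erase_of_mem (Finset.mem_univ _), Finset.card_univ, Fintype.card_fin]
  · rw [restrict_pi_Icc d]
    simp only [pprod, ← Finset.prod_pow]
    have h := integral_pi_map (fun _ : Fin d => volume.restrict (Set.Icc (0:ℝ) 1))
      (fun j => fun t => (phi d N hd i j t)^2)
    rw [h, ← Finset.mul_prod_erase Finset.univ _ (Finset.mem_univ (⟨0, hd⟩ : Fin d))]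
    have e1 : ∫ y, (phi d N hd i ⟨0, hd⟩ y)^2 ∂(volume.restrict (Set.Icc (0:ℝ) 1))
        = 1/(3*(N:ℝ)) + ((N:ℝ)-1-(i:ℝ))/N := by
      simp only [hphi0]
      exact intB N i
    have e2 : ∀ j ∈ Finset.univ.erase (⟨0, hd⟩ : Fin d),
        ∫ y, (phi d N hd i j y)^2 ∂(volume.restrict (Set.Icc (0:ℝ) 1)) = 1/3 := by
      intro j hj
      simp only [hphij j (Finset.ne_of_mem_erase hj), id]
      exact intSq
    rw [e1, Finset.prod_congr rfl e2, Finset.prod_const,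
      Finset.card_erase_of_mem (Finset.mem_univ _), Finset.card_univ, Fintype.card_fin]

/-- The stratified sample based on the vertical strip partition of `[0,1]^d` into `N`
equivolume strips has expected squared `L2`-discrepancy
`(1/2^d − ((3N−1)/(2N))·(1/3^d))/N`, strictly smaller than the Monte Carlo value
`(1/2^d − 1/3^d)/N`. -/
theorem stmt5 (d N : ℕ) (hd : 0 < d) (hN : 2 ≤ N) :
    (∫ P, disc2 d N P ∂(Measure.pi fun i : Fin N => unif (vertStrip d N hd i)))
      = (1 / 2 ^ d - ((3 * N - 1) / (2 * N)) * (1 / 3 ^ d)) / N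
    ∧ (1 / 2 ^ d - ((3 * (N : ℝ) - 1) / (2 * N)) * (1 / 3 ^ d)) / N
        < (1 / 2 ^ d - 1 / 3 ^ d) / N := by
  have hN0 : 0 < N := by omega
  have hNR : (0:ℝ) < N := by exact_mod_cast hN0
  have hNR2 : (2:ℝ) ≤ N := by exact_mod_cast hN
  constructor
  · classical
    haveI : ∀ i : Fin N, IsProbabilityMeasure (unif (vertStrip d N hd i)) :=
      fun i => unif_prob d N hd i
    set μ := (Measure.pi fun i : Fin N => unif (vertStrip d N hd i)) with hμ
    haveI : IsProbabilityMeasure μ := by rw [hμ]; infer_instance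
    haveI hfin : IsFiniteMeasure ((volume : Measure (Fin d → ℝ)).restrict (Set.Icc 0 1)) :=
      ⟨by rw [Measure.restrict_apply_univ]; exact isCompact_Icc.measure_lt_top⟩
    have hInt : Integrable (Function.uncurry fun (P : Fin N → Fin d → ℝ) (x : Fin d → ℝ) =>
        ((Set.ncard {i | P i ∈ box d x} : ℝ) / N - (volume (box d x)).toReal) ^ 2)
        (μ.prod (volume.restrict (Set.Icc 0 1))) := by
      have hmF := (measurable_F d N).aestronglyMeasurable
        (μ := μ.prod (volume.restrict (Set.Icc (0:Fin d → ℝ) 1)))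
      refine Integrable.mono' (integrable_const 1) hmF ?_
      have hms : MeasurableSet ((Set.univ : Set (Fin N → Fin d → ℝ)) ×ˢ Set.Icc (0:Fin d → ℝ) 1) :=
        MeasurableSet.univ.prod measurableSet_Icc
      have hre : μ.prod (volume.restrict (Set.Icc (0:Fin d → ℝ) 1))
          = (μ.prod volume).restrict (Set.univ ×ˢ Set.Icc 0 1) := by
        calc μ.prod (volume.restrict (Set.Icc (0:Fin d → ℝ) 1))
            = (μ.restrict Set.univ).prod (volume.restrict (Set.Icc 0 1)) := by
              rw [Measure.restrict_univ]
          _ = (μ.prod volume).restrict (Set.univ ×ˢ Set.Icc 0 1) := Measure.prod_restrict _ _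
      rw [hre]
      refine (ae_restrict_mem hms).mono fun q hq => ?_
      have hq2 : q.2 ∈ Set.Icc (0:Fin d → ℝ) 1 := hq.2
      have h1 : (0:ℝ) ≤ (Set.ncard {i | q.1 i ∈ box d q.2} : ℝ) / N := by positivity
      have h2 : (Set.ncard {i | q.1 i ∈ box d q.2} : ℝ) / N ≤ 1 := by
        rw [div_le_one hNR]
        have hle : {i | q.1 i ∈ box d q.2}.ncard ≤ N := by
          have := Set.ncard_le_ncard (Set.subset_univ {i | q.1 i ∈ box d q.2}) Set.finite_univ
          simpa [Set.ncard_univ] using this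
        exact_mod_cast hle
      have h3 : (0:ℝ) ≤ (volume (box d q.2)).toReal := ENNReal.toReal_nonneg
      have h4 : (volume (box d q.2)).toReal ≤ 1 := by
        rw [vol_box_toReal d q.2 hq2]
        exact Finset.prod_le_one (fun j _ => hq2.1 j) (fun j _ => hq2.2 j)
      show ‖((Set.ncard {i | q.1 i ∈ box d q.2} : ℝ) / N
          - (volume (box d q.2)).toReal) ^ 2‖ ≤ 1
      rw [Real.norm_eq_abs, abs_of_nonneg (sq_nonneg _)]
      nlinarith
    have hswap : ∫ P, disc2 d N P ∂μ
        = ∫ x in Set.Icc (0:Fin d → ℝ) 1, (∫ P, ((Set.ncard {i | P i ∈ box d x} : ℝ) / N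
            - (volume (box d x)).toReal) ^ 2 ∂μ) := by
      simp only [disc2]
      exact integral_integral_swap hInt
    rw [hswap]
    have hcongr : ∫ x in Set.Icc (0:Fin d → ℝ) 1, (∫ P, ((Set.ncard {i | P i ∈ box d x} : ℝ) / N
            - (volume (box d x)).toReal) ^ 2 ∂μ)
        = ∫ x in Set.Icc (0:Fin d → ℝ) 1,
            (1/(N:ℝ)^2) * ∑ i : Fin N, (pprod d N hd i x - (pprod d N hd i x)^2) :=
      setIntegral_congr_fun measurableSet_Icc fun x hx => inner_integral d N hd hN0 x hx
    rw [hcongr, integral_const_mul]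
    have hintOn : ∀ i : Fin N, IntegrableOn
        (fun x => pprod d N hd i x - (pprod d N hd i x)^2) (Set.Icc (0:Fin d → ℝ) 1) volume :=
      fun i => ContinuousOn.integrableOn_compact isCompact_Icc
        (((continuous_pprod d N hd i).sub ((continuous_pprod d N hd i).pow 2)).continuousOn)
    rw [integral_finset_sum _ (fun i _ => hintOn i)]
    have hsum : ∀ i : Fin N,
        ∫ x in Set.Icc (0:Fin d → ℝ) 1, (pprod d N hd i x - (pprod d N hd i x)^2)
        = (1/(2*(N:ℝ)) + ((N:ℝ)-1-(i:ℝ))/N) * (1/2)^(d-1)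
          - (1/(3*(N:ℝ)) + ((N:ℝ)-1-(i:ℝ))/N) * (1/3)^(d-1) := by
      intro i
      rw [integral_sub (f := pprod d N hd i) (g := fun x => (pprod d N hd i x)^2)
        (ContinuousOn.integrableOn_compact isCompact_Icc (continuous_pprod d N hd i).continuousOn)
        (ContinuousOn.integrableOn_compact isCompact_Icc
          ((continuous_pprod d N hd i).pow 2).continuousOn),
        (integral_pprod_pow d N hd i).1, (integral_pprod_pow d N hd i).2]
    simp only [hsum]
    rw [Finset.sum_sub_distrib, ← Finset.sum_mul, ← Finset.sum_mul]
    have hgauss : ∑ i : Fin N, ((N:ℝ)-1-(i:ℝ)) = (N:ℝ)*((N:ℝ)-1)/2 := by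
      have h1 : ∑ i : Fin N, ((i:ℕ):ℝ) = ∑ k ∈ Finset.range N, (k:ℝ) :=
        Fin.sum_univ_eq_sum_range (fun k => ((k:ℕ):ℝ)) N
      have h2 := congrArg (Nat.cast : ℕ → ℝ) (Finset.sum_range_id_mul_two N)
      push_cast [Nat.cast_sub (by omega : 1 ≤ N)] at h2
      have h3 : ∑ i : Fin N, ((N:ℝ)-1-(i:ℝ)) = N * ((N:ℝ)-1) - ∑ i : Fin N, ((i:ℕ):ℝ) := by
        rw [Finset.sum_sub_distrib, Finset.sum_const, Finset.card_univ, Fintype.card_fin,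
          nsmul_eq_mul]
      rw [h3, h1]
      linarith
    have hsA : ∑ i : Fin N, (1/(2*(N:ℝ)) + ((N:ℝ)-1-(i:ℝ))/N) = 1/2 + ((N:ℝ)-1)/2 := by
      rw [Finset.sum_add_distrib, Finset.sum_const, Finset.card_univ, Fintype.card_fin,
        nsmul_eq_mul, ← Finset.sum_div, hgauss]
      field_simp
    have hsB : ∑ i : Fin N, (1/(3*(N:ℝ)) + ((N:ℝ)-1-(i:ℝ))/N) = 1/3 + ((N:ℝ)-1)/2 := by
      rw [Finset.sum_add_distrib, Finset.sum_const, Finset.card_univ, Fintype.card_fin,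
        nsmul_eq_mul, ← Finset.sum_div, hgauss]
      field_simp
    rw [hsA, hsB]
    obtain ⟨e, hde⟩ : ∃ e, d = e + 1 := ⟨d - 1, (Nat.succ_pred_eq_of_pos hd).symm⟩
    subst hde
    simp only [Nat.add_sub_cancel]
    simp only [one_div, inv_pow]
    field_simp
    ring
  · have h3 : (0:ℝ) < 1/3^d := by positivity
    have hlt : (1:ℝ) < (3*(N:ℝ)-1)/(2*N) := by
      rw [lt_div_iff₀ (by positivity)]
      linarith
    have hmul : (1:ℝ)*(1/3^d) < ((3*(N:ℝ)-1)/(2*N))*(1/3^d) :=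
      mul_lt_mul_of_pos_right hlt h3
    rw [div_eq_mul_inv, div_eq_mul_inv ((1:ℝ)/2^d - 1/3^d)]
    exact mul_lt_mul_of_pos_right (by linarith) (inv_pos.2 hNR)
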